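/- If X, Y, Z are independent random vectors in ℝⁿ with absolutely continuous distributions, and the entropies h(X+Y+Z), h(Z), h(X+Z), h(Y+Z) are all well-defined (finite), then h(X+Y+Z) + h(Z) ≤ h(X+Z) + h(Y+Z). -/

import Mathlib

open MeasureTheory ProbabilityTheory Real Pointwise

/-- Differential (Shannon) entropy of a measure on ℝⁿ,
computed from its density w.r.t. Lebesgue measure: `h(μ) = -∫ p log p`. -/
noncomputable def dEnt {n : ℕ} (μ : Measure (EuclideanSpace ℝ (Fin n))) : ℝ :=
  -∫ x, ((μ.rnDeriv volume x).toReal) * Real.log ((μ.rnDeriv volume x).toReal)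

/-- The integrand whose integrability expresses that the entropy of `μ` is
well-defined and finite. -/
noncomputable def entIntegrand {n : ℕ} (μ : Measure (EuclideanSpace ℝ (Fin n))) :
    EuclideanSpace ℝ (Fin n) → ℝ :=
  fun x => ((μ.rnDeriv volume x).toReal) * Real.log ((μ.rnDeriv volume x).toReal)

/-!
Write `s, u, r, k` for the densities of `X + Z`, `Y + Z`, `X + Y + Z` and `Z`. Since
`h(V) = -𝔼[log p_V(V)]`, the claim says `𝔼[log T] ≤ 0` for
`T = s(X+Z) u(Y+Z) / r(X+Y+Z) / k(Z)`, and by Gibbs' inequality (`log t ≤ t - 1`) it suffices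
to show `𝔼[T] ≤ 1`. Integrating `z` against `k` cancels the factor `1 / k(z)`; substituting
`w = x + y + z`, what remains is `∫ (∫ u(w - x) dP_X(x)) (∫ s(w - y) dP_Y(y)) / r(w) dw`, and
both inner integrals equal `r(w)`: they are the convolution formulas for the density of
`X + (Y + Z) = Y + (X + Z)`. Hence `𝔼[T] ≤ ∫ r = 1`.
-/

open scoped ENNReal

namespace MeasureTheory

variable {G : Type*} [AddCommGroup G] [MeasurableSpace G] [MeasurableAdd₂ G] [MeasurableNeg G]
  {μ : Measure G} [μ.IsAddLeftInvariant] [SFinite μ]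

theorem Measure.conv_withDensity (ν : Measure G) [SFinite ν] {f : G → ℝ≥0∞}
    (hf : Measurable f) :
    ν ∗ μ.withDensity f = μ.withDensity fun w => ∫⁻ x, f (w - x) ∂ν := by
  refine ext_of_lintegral _ fun φ hφ => ?_
  rw [lintegral_conv hφ, lintegral_withDensity_eq_lintegral_mul _ (by fun_prop) hφ]
  calc ∫⁻ x, ∫⁻ y, φ (x + y) ∂μ.withDensity f ∂ν
      = ∫⁻ x, ∫⁻ w, f (w - x) * φ w ∂μ ∂ν := by
        refine lintegral_congr fun x => ?_
        rw [lintegral_withDensity_eq_lintegral_mul _ hf (by fun_prop),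
          ← lintegral_add_left_eq_self (fun w => f (w - x) * φ w) x]
        simp only [Pi.mul_apply, add_sub_cancel_left]
    _ = ∫⁻ w, ∫⁻ x, f (w - x) * φ w ∂ν ∂μ := lintegral_lintegral_swap (by fun_prop)
    _ = ∫⁻ w, (∫⁻ x, f (w - x) ∂ν) * φ w ∂μ :=
        lintegral_congr fun w => lintegral_mul_const _ (by fun_prop)

theorem lintegral_lintegral_lintegral_div_le (ν₁ ν₂ : Measure G) [SFinite ν₁] [SFinite ν₂]
    {s u r : G → ℝ≥0∞} (hs : Measurable s) (hu : Measurable u) (hr : Measurable r)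
    (hr₁ : r =ᵐ[μ] fun w => ∫⁻ x, u (w - x) ∂ν₁)
    (hr₂ : r =ᵐ[μ] fun w => ∫⁻ y, s (w - y) ∂ν₂) :
    ∫⁻ x, ∫⁻ y, ∫⁻ z, s (x + z) * u (y + z) / r (x + y + z) ∂μ ∂ν₂ ∂ν₁ ≤ ∫⁻ w, r w ∂μ := by
  calc ∫⁻ x, ∫⁻ y, ∫⁻ z, s (x + z) * u (y + z) / r (x + y + z) ∂μ ∂ν₂ ∂ν₁
      = ∫⁻ x, ∫⁻ y, ∫⁻ w, u (w - x) * s (w - y) * (r w)⁻¹ ∂μ ∂ν₂ ∂ν₁ := by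
        refine lintegral_congr fun x => lintegral_congr fun y => ?_
        rw [← lintegral_add_left_eq_self (fun w => u (w - x) * s (w - y) * (r w)⁻¹) (x + y)]
        refine lintegral_congr fun z => ?_
        rw [show x + y + z - x = y + z by abel, show x + y + z - y = x + z by abel,
          div_eq_mul_inv, mul_comm (s _)]
    _ = ∫⁻ x, ∫⁻ w, ∫⁻ y, u (w - x) * s (w - y) * (r w)⁻¹ ∂ν₂ ∂μ ∂ν₁ :=
        lintegral_congr fun x => lintegral_lintegral_swap (by fun_prop)
    _ = ∫⁻ w, ∫⁻ x, ∫⁻ y, u (w - x) * s (w - y) * (r w)⁻¹ ∂ν₂ ∂ν₁ ∂μ :=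
        lintegral_lintegral_swap (Measurable.lintegral_prod_right (by fun_prop)).aemeasurable
    _ = ∫⁻ w, (∫⁻ x, u (w - x) ∂ν₁) * (∫⁻ y, s (w - y) ∂ν₂) * (r w)⁻¹ ∂μ := by
        refine lintegral_congr fun w => ?_
        rw [← lintegral_mul_const _ (by fun_prop), ← lintegral_mul_const _ (by fun_prop)]
        refine lintegral_congr fun x => ?_
        rw [← lintegral_const_mul _ (by fun_prop), ← lintegral_mul_const _ (by fun_prop)]
    _ ≤ ∫⁻ w, r w ∂μ := by
        refine lintegral_mono_ae ?_
        filter_upwards [hr₁, hr₂] with w h₁ h₂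
        rw [← h₁, ← h₂, mul_assoc]
        exact ENNReal.mul_div_le

end MeasureTheory

namespace ProbabilityTheory

variable {Ω : Type*} {mΩ : MeasurableSpace Ω} {P : Measure Ω}

theorem iIndepFun.lintegral_comp_fin_three [IsFiniteMeasure P] {β : Type*} [MeasurableSpace β]
    {X Y Z : Ω → β} (hX : Measurable X) (hY : Measurable Y) (hZ : Measurable Z)
    (hind : iIndepFun ![X, Y, Z] P) {F : β × β × β → ℝ≥0∞}
    (hF : Measurable F) :
    ∫⁻ ω, F (X ω, Y ω, Z ω) ∂P
      = ∫⁻ x, ∫⁻ y, ∫⁻ z, F (x, y, z) ∂(P.map Z) ∂(P.map Y) ∂(P.map X) := by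
  have hmeas : ∀ i, Measurable (![X, Y, Z] i) := fun i => by fin_cases i <;> assumption
  have hX_YZ : IndepFun X (fun ω => (Y ω, Z ω)) P := by
    simpa using (hind.indepFun_prodMk hmeas 1 2 0 (by decide) (by decide)).symm
  have hYZ : IndepFun Y Z P := by simpa using hind.indepFun (show (1 : Fin 3) ≠ 2 by decide)
  rw [← lintegral_map hF (hX.prodMk (hY.prodMk hZ)),
    (indepFun_iff_map_prod_eq_prod_map_map hX.aemeasurable (hY.prodMk hZ).aemeasurable).mp hX_YZ,
    (indepFun_iff_map_prod_eq_prod_map_map hY.aemeasurable hZ.aemeasurable).mp hYZ,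
    lintegral_prod _ hF.aemeasurable]
  exact lintegral_congr fun x => lintegral_prod _ (by fun_prop)

theorem ae_pdf_comp_toReal_pos [IsFiniteMeasure P] {E : Type*} [MeasurableSpace E]
    (V : Ω → E) (μ : Measure E := by volume_tac) [HasPDF V P μ] :
    ∀ᵐ ω ∂P, 0 < (pdf V P μ (V ω)).toReal := by
  refine ae_of_ae_map (p := fun x => 0 < (pdf V P μ x).toReal) (HasPDF.aemeasurable V P μ) ?_
  have hac : P.map V ≪ μ := HasPDF.absolutelyContinuous
  have hfin : ∀ᵐ x ∂μ, pdf V P μ x < ∞ := pdf.ae_lt_top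
  filter_upwards [Measure.rnDeriv_pos hac, hac.ae_le hfin] with x hpos hfin
  exact ENNReal.toReal_pos hpos.ne' hfin.ne

theorem integral_nonpos_of_lintegral_exp_le_one [IsProbabilityMeasure P] {f : Ω → ℝ}
    (hle : ∫⁻ ω, ENNReal.ofReal (exp (f ω)) ∂P ≤ 1) : ∫ ω, f ω ∂P ≤ 0 := by
  by_cases hf : Integrable f P
  swap
  · exact (integral_undef hf).le
  have hexp_meas : AEStronglyMeasurable (fun ω => exp (f ω)) P :=
    continuous_exp.comp_aestronglyMeasurable hf.aestronglyMeasurable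
  have hexp : Integrable (fun ω => exp (f ω)) P :=
    ⟨hexp_meas, (hasFiniteIntegral_iff_ofReal (.of_forall fun ω => (exp_pos _).le)).mpr
      (hle.trans_lt ENNReal.one_lt_top)⟩
  calc ∫ ω, f ω ∂P
      ≤ ∫ ω, (exp (f ω) - 1) ∂P :=
        integral_mono hf (hexp.sub (integrable_const 1)) fun ω => by
          linarith [add_one_le_exp (f ω)]
    _ = (∫⁻ ω, ENNReal.ofReal (exp (f ω)) ∂P).toReal - 1 := by
        rw [integral_sub hexp (integrable_const 1),
          integral_eq_lintegral_of_nonneg_ae (.of_forall fun ω => (exp_pos _).le) hexp_meas]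
        simp
    _ ≤ 0 := by
        have := ENNReal.toReal_mono ENNReal.one_ne_top hle
        rw [ENNReal.toReal_one] at this
        linarith

section Density

variable {G : Type*} [AddCommGroup G] [MeasurableSpace G] [MeasurableAdd₂ G]
  {μ : Measure G} [μ.IsAddLeftInvariant] [SigmaFinite μ]

theorem IndepFun.hasPDF_add [IsFiniteMeasure P] {A B : Ω → G} (hA : AEMeasurable A P) [HasPDF B P μ]
    (h : IndepFun A B P) : HasPDF (fun ω => A ω + B ω) P μ := by
  have hB := HasPDF.aemeasurable B P μ
  change HasPDF (A + B) P μ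
  rw [hasPDF_iff_of_aemeasurable (hA.add hB), h.map_add_eq_map_conv_map₀ hA hB]
  exact ⟨inferInstance, Measure.conv_absolutelyContinuous HasPDF.absolutelyContinuous⟩

variable [MeasurableNeg G]

theorem IndepFun.pdf_add_ae_eq [IsFiniteMeasure P] {A B : Ω → G} (hA : AEMeasurable A P) [HasPDF B P μ]
    (h : IndepFun A B P) :
    pdf (fun ω => A ω + B ω) P μ =ᵐ[μ] fun w => ∫⁻ a, pdf B P μ (w - a) ∂(P.map A) := by
  rw [pdf_def, show (fun ω => A ω + B ω) = A + B from rfl,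
    h.map_add_eq_map_conv_map₀ hA (HasPDF.aemeasurable B P μ), map_eq_withDensity_pdf B P μ,
    Measure.conv_withDensity _ (measurable_pdf B P μ)]
  exact Measure.rnDeriv_withDensity μ (Measurable.lintegral_prod_right (by fun_prop))

theorem lintegral_pdf_ratio_le_one [IsProbabilityMeasure P] {X Y Z : Ω → G}
    (hX : Measurable X) (hY : Measurable Y) (hZ : Measurable Z)
    (hind : iIndepFun ![X, Y, Z] P) [HasPDF Z P μ] :
    ∫⁻ ω, pdf (fun ω => X ω + Z ω) P μ (X ω + Z ω) * pdf (fun ω => Y ω + Z ω) P μ (Y ω + Z ω)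
        / pdf (fun ω => X ω + Y ω + Z ω) P μ (X ω + Y ω + Z ω) / pdf Z P μ (Z ω) ∂P ≤ 1 := by
  have hmeas : ∀ i, Measurable (![X, Y, Z] i) := fun i => by fin_cases i <;> assumption
  have hXZ : IndepFun X Z P := by simpa using hind.indepFun (show (0 : Fin 3) ≠ 2 by decide)
  have hYZ : IndepFun Y Z P := by simpa using hind.indepFun (show (1 : Fin 3) ≠ 2 by decide)
  have : HasPDF (fun ω => X ω + Z ω) P μ := hXZ.hasPDF_add hX.aemeasurable
  have : HasPDF (fun ω => Y ω + Z ω) P μ := hYZ.hasPDF_add hY.aemeasurable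
  set s := pdf (fun ω => X ω + Z ω) P μ
  set u := pdf (fun ω => Y ω + Z ω) P μ
  set r := pdf (fun ω => X ω + Y ω + Z ω) P μ
  set k := pdf Z P μ
  have hr₁ : r =ᵐ[μ] fun w => ∫⁻ x, u (w - x) ∂(P.map X) := by
    have hX_YZ : IndepFun X (fun ω => Y ω + Z ω) P :=
      hind.indepFun_add_right hmeas 0 1 2 (by decide) (by decide)
    simpa only [← add_assoc] using hX_YZ.pdf_add_ae_eq (μ := μ) hX.aemeasurable
  have hr₂ : r =ᵐ[μ] fun w => ∫⁻ y, s (w - y) ∂(P.map Y) := by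
    have hY_XZ : IndepFun Y (fun ω => X ω + Z ω) P :=
      hind.indepFun_add_right hmeas 1 0 2 (by decide) (by decide)
    simpa only [add_left_comm, ← add_assoc] using hY_XZ.pdf_add_ae_eq (μ := μ) hY.aemeasurable
  calc ∫⁻ ω, s (X ω + Z ω) * u (Y ω + Z ω) / r (X ω + Y ω + Z ω) / k (Z ω) ∂P
      = ∫⁻ x, ∫⁻ y, ∫⁻ z, s (x + z) * u (y + z) / r (x + y + z) / k z
          ∂(P.map Z) ∂(P.map Y) ∂(P.map X) :=
        hind.lintegral_comp_fin_three hX hY hZ (F := fun p => s (p.1 + p.2.2) * u (p.2.1 + p.2.2)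
          / r (p.1 + p.2.1 + p.2.2) / k p.2.2) (by fun_prop)
    _ ≤ ∫⁻ x, ∫⁻ y, ∫⁻ z, s (x + z) * u (y + z) / r (x + y + z) ∂μ ∂(P.map Y) ∂(P.map X) := by
        rw [map_eq_withDensity_pdf Z P μ]
        refine lintegral_mono fun x => lintegral_mono fun y => ?_
        exact (lintegral_withDensity_le_lintegral_mul μ (measurable_pdf Z P μ) _).trans
          (lintegral_mono fun z => ENNReal.mul_div_le)
    _ ≤ ∫⁻ w, r w ∂μ := lintegral_lintegral_lintegral_div_le _ _ (measurable_pdf _ _ _)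
          (measurable_pdf _ _ _) (measurable_pdf _ _ _) hr₁ hr₂
    _ ≤ P.map (fun ω => X ω + Y ω + Z ω) Set.univ := by
        simpa using setLIntegral_pdf_le_map (fun ω => X ω + Y ω + Z ω) P μ Set.univ
    _ = 1 := by rw [Measure.map_apply (by fun_prop) .univ]; simp

end Density

end ProbabilityTheory

namespace ENNReal

theorem ofReal_exp_log_add_log_sub_log_sub_log {a b c d : ℝ≥0∞} (ha : 0 < a.toReal)
    (hb : 0 < b.toReal) (hc : 0 < c.toReal) (hd : 0 < d.toReal) :
    ENNReal.ofReal
        (Real.exp (Real.log a.toReal + Real.log b.toReal - Real.log c.toReal - Real.log d.toReal))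
      = a * b / c / d := by
  have hfin : a * b / c / d ≠ ∞ :=
    div_ne_top (div_ne_top (mul_ne_top (toReal_pos_iff.mp ha).2.ne (toReal_pos_iff.mp hb).2.ne)
      (toReal_pos_iff.mp hc).1.ne') (toReal_pos_iff.mp hd).1.ne'
  rw [← ofReal_toReal hfin, toReal_div, toReal_div, toReal_mul, Real.exp_sub, Real.exp_sub,
    Real.exp_add, Real.exp_log ha, Real.exp_log hb, Real.exp_log hc, Real.exp_log hd]

end ENNReal

section Entropy

variable {Ω : Type*} {mΩ : MeasurableSpace Ω} {P : Measure Ω} [IsFiniteMeasure P] {n : ℕ}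
  (V : Ω → EuclideanSpace ℝ (Fin n)) [HasPDF V P]

theorem integral_log_pdf_comp_eq_neg_dEnt :
    ∫ ω, Real.log (pdf V P volume (V ω)).toReal ∂P = -dEnt (P.map V) := by
  rw [dEnt, neg_neg, ← pdf.integral_pdf_smul (μ := volume)
    (measurable_pdf V P volume).ennreal_toReal.log.aestronglyMeasurable]
  rfl

theorem integrable_log_pdf_comp (h : Integrable (entIntegrand (P.map V)) volume) :
    Integrable (fun ω => Real.log (pdf V P volume (V ω)).toReal) P :=
  (pdf.integrable_pdf_smul_iff
    (measurable_pdf V P volume).ennreal_toReal.log.aestronglyMeasurable).mp h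

end Entropy

theorem entropy_submodularity_general
    {n : ℕ}
    {Ω : Type} [MeasureSpace Ω] (hP : IsProbabilityMeasure (ℙ : Measure Ω))
    (X Y Z : Ω → EuclideanSpace ℝ (Fin n))
    (hX : Measurable X) (hY : Measurable Y) (hZ : Measurable Z)
    (hIndep : iIndepFun (m := fun _ : Fin 3 =>
        (inferInstance : MeasurableSpace (EuclideanSpace ℝ (Fin n))))
      ![X, Y, Z] (ℙ : Measure Ω))
    (hZac : Measure.map Z (ℙ : Measure Ω) ≪ volume)
    (hXYZ : Integrable
      (entIntegrand (Measure.map (fun ω => X ω + Y ω + Z ω) (ℙ : Measure Ω))) volume)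
    (hZe : Integrable (entIntegrand (Measure.map Z (ℙ : Measure Ω))) volume)
    (hXZ : Integrable
      (entIntegrand (Measure.map (fun ω => X ω + Z ω) (ℙ : Measure Ω))) volume)
    (hYZ : Integrable
      (entIntegrand (Measure.map (fun ω => Y ω + Z ω) (ℙ : Measure Ω))) volume) :
    dEnt (Measure.map (fun ω => X ω + Y ω + Z ω) (ℙ : Measure Ω))
      + dEnt (Measure.map Z (ℙ : Measure Ω))
    ≤ dEnt (Measure.map (fun ω => X ω + Z ω) (ℙ : Measure Ω))
      + dEnt (Measure.map (fun ω => Y ω + Z ω) (ℙ : Measure Ω)) := by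
  have hmeas : ∀ i, Measurable (![X, Y, Z] i) := fun i => by fin_cases i <;> assumption
  have : HasPDF Z ℙ := (hasPDF_iff_of_aemeasurable hZ.aemeasurable).mpr ⟨inferInstance, hZac⟩
  have : HasPDF (fun ω => X ω + Z ω) ℙ :=
    (hIndep.indepFun (show (0 : Fin 3) ≠ 2 by decide)).hasPDF_add hX.aemeasurable
  have : HasPDF (fun ω => Y ω + Z ω) ℙ :=
    (hIndep.indepFun (show (1 : Fin 3) ≠ 2 by decide)).hasPDF_add hY.aemeasurable
  have : HasPDF (fun ω => X ω + Y ω + Z ω) ℙ :=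
    (hIndep.indepFun_add_left hmeas 0 1 2 (by decide) (by decide)).hasPDF_add
      (hX.add hY).aemeasurable
  set L : (Ω → EuclideanSpace ℝ (Fin n)) → Ω → ℝ :=
    fun V ω => Real.log (pdf V ℙ volume (V ω)).toReal
  have gibbs := integral_nonpos_of_lintegral_exp_le_one (P := ℙ)
    (f := fun ω => L (fun ω => X ω + Z ω) ω + L (fun ω => Y ω + Z ω) ω
      - L (fun ω => X ω + Y ω + Z ω) ω - L Z ω) <| by
    refine le_of_eq_of_le (lintegral_congr_ae ?_)
      (lintegral_pdf_ratio_le_one (μ := volume) hX hY hZ hIndep)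
    filter_upwards [ae_pdf_comp_toReal_pos (fun ω => X ω + Z ω),
      ae_pdf_comp_toReal_pos (fun ω => Y ω + Z ω),
      ae_pdf_comp_toReal_pos (fun ω => X ω + Y ω + Z ω), ae_pdf_comp_toReal_pos Z]
      with ω ha hb hc hd
    exact ENNReal.ofReal_exp_log_add_log_sub_log_sub_log ha hb hc hd
  have hs := integrable_log_pdf_comp (fun ω => X ω + Z ω) hXZ
  have hu := integrable_log_pdf_comp (fun ω => Y ω + Z ω) hYZ
  have hr := integrable_log_pdf_comp (fun ω => X ω + Y ω + Z ω) hXYZ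
  have hk := integrable_log_pdf_comp Z hZe
  rw [integral_sub, integral_sub, integral_add, integral_log_pdf_comp_eq_neg_dEnt,
    integral_log_pdf_comp_eq_neg_dEnt, integral_log_pdf_comp_eq_neg_dEnt,
    integral_log_pdf_comp_eq_neg_dEnt] at gibbs
  · linarith
  exacts [hs, hu, hs.add hu, hr, (hs.add hu).sub hr, hk]

/-- Submodularity of entropy with respect to convolution: for independent
random vectors `X, Y, Z` in ℝⁿ with absolutely continuous distributions and
well-defined entropies, `h(X+Y+Z) + h(Z) ≤ h(X+Z) + h(Y+Z)`. -/
theorem entropy_submodularity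
    {n : ℕ} (hn : 1 ≤ n)
    {Ω : Type} [MeasureSpace Ω] (hP : IsProbabilityMeasure (ℙ : Measure Ω))
    (X Y Z : Ω → EuclideanSpace ℝ (Fin n))
    (hX : Measurable X) (hY : Measurable Y) (hZ : Measurable Z)
    (hIndep : iIndepFun (m := fun _ : Fin 3 =>
        (inferInstance : MeasurableSpace (EuclideanSpace ℝ (Fin n))))
      ![X, Y, Z] (ℙ : Measure Ω))
    (hXac : Measure.map X (ℙ : Measure Ω) ≪ volume)
    (hYac : Measure.map Y (ℙ : Measure Ω) ≪ volume)
    (hZac : Measure.map Z (ℙ : Measure Ω) ≪ volume)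
    (hXYZ : Integrable
      (entIntegrand (Measure.map (fun ω => X ω + Y ω + Z ω) (ℙ : Measure Ω))) volume)
    (hZe : Integrable (entIntegrand (Measure.map Z (ℙ : Measure Ω))) volume)
    (hXZ : Integrable
      (entIntegrand (Measure.map (fun ω => X ω + Z ω) (ℙ : Measure Ω))) volume)
    (hYZ : Integrable
      (entIntegrand (Measure.map (fun ω => Y ω + Z ω) (ℙ : Measure Ω))) volume) :
    dEnt (Measure.map (fun ω => X ω + Y ω + Z ω) (ℙ : Measure Ω))
      + dEnt (Measure.map Z (ℙ : Measure Ω))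
    ≤ dEnt (Measure.map (fun ω => X ω + Z ω) (ℙ : Measure Ω))
      + dEnt (Measure.map (fun ω => Y ω + Z ω) (ℙ : Measure Ω)) :=
  entropy_submodularity_general hP X Y Z hX hY hZ hIndep hZac hXYZ hZe hXZ hYZ
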